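/- Let G be a graph with a path decomposition (X_1,...,X_l) of width k, and S ⊆ V(G) with more than 2k S-branches. Let H_1,...,H_c be the S-branches ordered by α-value, and let α̂(S) = max_{x∈S} α(x) and β̂(S) = min_{x∈S} β(x). Then α̂(S) < α(H_q) ≤ β̂(S) for all q with 2k+1 ≤ q ≤ c. -/
import Mathlib


/-- `H` is an `S`-component of `G`. -/
def IsSComponent {V : Type*} (G : SimpleGraph V) (S H : Set V) : Prop :=
  H.Nonempty ∧ (∀ v ∈ H, v ∉ S) ∧ (G.induce H).Connected ∧
    (∀ u ∈ H, ∀ w : V, G.Adj u w → w ∈ H ∨ w ∈ S) ∧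
    (∀ s ∈ S, ∃ u ∈ H, G.Adj s u)


lemma scomp_subset {V : Type*} {G : SimpleGraph V} {S H₁ H₂ : Set V}
    (h1 : IsSComponent G S H₁) (h2 : IsSComponent G S H₂)
    {v : V} (hv1 : v ∈ H₁) (hv2 : v ∈ H₂) : H₁ ⊆ H₂ := by
  intro u hu
  obtain ⟨wk⟩ := h1.2.2.1.preconnected ⟨v, hv1⟩ ⟨u, hu⟩
  have key : ∀ (x y : H₁) (w : (G.induce H₁).Walk x y), (x:V) ∈ H₂ → (y:V) ∈ H₂ := by
    intro x y w
    induction w with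
    | nil => exact id
    | cons h w ih =>
      intro hx
      apply ih
      rcases h2.2.2.2.1 _ hx _ (by exact h) with h' | h'
      · exact h'
      · exact absurd h' (h1.2.1 _ (by exact Subtype.coe_prop _))
  exact key _ _ wk hv2

lemma walk_bag {V : Type*} [DecidableEq V] {G : SimpleGraph V} {l : ℕ} {X : ℕ → Finset V}
    (hedge : ∀ u v : V, G.Adj u v → ∃ i < l, u ∈ X i ∧ v ∈ X i)
    (hpd3 : ∀ i j m : ℕ, i ≤ j → j ≤ m → m < l → X i ∩ X m ⊆ X j)
    {H : Set V} :
    ∀ (u w : H) (wk : (G.induce H).Walk u w) (p r j : ℕ),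
      (u:V) ∈ X p → (w:V) ∈ X r → p ≤ j → j ≤ r → r < l → ∃ v ∈ X j, v ∈ H := by
  intro u w wk
  induction wk with
  | nil =>
    intro p r j hp hr hpj hjr hrl
    exact ⟨_, hpd3 p j r hpj hjr hrl (Finset.mem_inter.2 ⟨hp, hr⟩), Subtype.coe_prop _⟩
  | @cons u u' w h wk ih =>
    intro p r j hp hr hpj hjr hrl
    obtain ⟨t, htl, hut, hu't⟩ := hedge _ _ (by exact h)
    by_cases hjt : j ≤ t
    · exact ⟨_, hpd3 p j t hpj hjt htl (Finset.mem_inter.2 ⟨hp, hut⟩), Subtype.coe_prop _⟩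
    · exact ih t r j hu't hr (le_of_lt (lt_of_not_ge hjt)) hjr hrl

/-- `H` is an `S`-branch of `G`: an `S`-component with at least two vertices. -/
def IsSBranch {V : Type*} (G : SimpleGraph V) (S H : Set V) : Prop :=
  IsSComponent G S H ∧ ∃ u ∈ H, ∃ w ∈ H, u ≠ w

/-- Lemma: for a width-`k` path decomposition (0-indexed bags) and `S`-branches
`H_0, …, H_{c-1}` ordered by start time `α`, with `c > 2k`, every branch `H_q`
with `q ≥ 2k` (0-indexed, i.e. the (2k+1)-st onwards) satisfies
`α̂(S) < α(H_q) ≤ β̂(S)`, i.e. `α(x) < α(H_q) ≤ β(x)` for every `x ∈ S`. -/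
theorem stmt_6 {V : Type*} [DecidableEq V] (G : SimpleGraph V)
    (k l : ℕ) (X : ℕ → Finset V)
    (hcov : ∀ v : V, ∃ i < l, v ∈ X i)
    (hedge : ∀ u v : V, G.Adj u v → ∃ i < l, u ∈ X i ∧ v ∈ X i)
    (hpd3 : ∀ i j m : ℕ, i ≤ j → j ≤ m → m < l → X i ∩ X m ⊆ X j)
    (hw : ∀ i < l, (X i).card ≤ k + 1)
    (S : Set V) (c : ℕ) (hck : 2 * k < c)
    (H : Fin c → Set V) (hbr : ∀ i, IsSBranch G S (H i))
    (hinj : Function.Injective H)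
    (a : Fin c → ℕ) (hal : ∀ i, a i < l)
    (haint : ∀ i, ∃ v ∈ X (a i), v ∈ H i)
    (hamin : ∀ i, ∀ j < l, (∃ v ∈ X j, v ∈ H i) → a i ≤ j)
    (hmono : ∀ i j : Fin c, i ≤ j → a i ≤ a j)
    (ax bx : V → ℕ)
    (haxl : ∀ x ∈ S, ax x < l) (hbxl : ∀ x ∈ S, bx x < l)
    (haxmem : ∀ x ∈ S, x ∈ X (ax x))
    (haxmin : ∀ x ∈ S, ∀ j < l, x ∈ X j → ax x ≤ j)
    (hbxmem : ∀ x ∈ S, x ∈ X (bx x))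
    (hbxmax : ∀ x ∈ S, ∀ j < l, x ∈ X j → j ≤ bx x) :
    ∀ q : Fin c, 2 * k ≤ (q : ℕ) → ∀ x ∈ S, ax x < a q ∧ a q ≤ bx x := by
  intro q hq x hx
  -- second part: a q ≤ bx x
  obtain ⟨u, huH, hadj⟩ := (hbr q).1.2.2.2.2 x hx
  obtain ⟨j, hjl, hxj, huj⟩ := hedge x u hadj
  have h2 : a q ≤ bx x := le_trans (hamin q j hjl ⟨u, huj, huH⟩) (hbxmax x hx j hjl hxj)
  refine ⟨?_, h2⟩
  -- first part
  by_contra hcon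
  push_neg at hcon
  set m := ax x with hm
  have hml : m < l := haxl x hx
  -- every branch i ≤ q meets bag X m
  have hmeet : ∀ i : Fin c, i ≤ q → ∃ v ∈ X m, v ∈ H i := by
    intro i hiq
    obtain ⟨v0, hv0X, hv0H⟩ := haint i
    obtain ⟨u', hu'H, hadj'⟩ := (hbr i).1.2.2.2.2 x hx
    obtain ⟨t, htl, hxt, hu't⟩ := hedge x u' hadj'
    have h1 : a i ≤ m := le_trans (hmono i q hiq) hcon
    have h3 : m ≤ t := haxmin x hx t htl hxt
    obtain ⟨wk⟩ := (hbr i).1.2.2.1.preconnected ⟨v0, hv0H⟩ ⟨u', hu'H⟩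
    exact walk_bag hedge hpd3 _ _ wk (a i) t m hv0X hu't h1 h3 htl
  -- choose such vertices
  have hqc : ∀ i : Fin ((q:ℕ)+1), (i : ℕ) < c := fun i =>
    lt_of_le_of_lt (Nat.lt_succ_iff.1 i.2) q.2
  have hle : ∀ i : Fin ((q:ℕ)+1), (⟨(i:ℕ), hqc i⟩ : Fin c) ≤ q :=
    fun i => Nat.lt_succ_iff.1 i.2
  choose g hgX hgH using fun i : Fin ((q:ℕ)+1) => hmeet ⟨(i:ℕ), hqc i⟩ (hle i)
  have hginj : Function.Injective g := by
    intro i j hij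
    by_contra hne
    have hHne : H ⟨(i:ℕ), hqc i⟩ ≠ H ⟨(j:ℕ), hqc j⟩ := by
      intro h
      have hfin : (⟨(i:ℕ), hqc i⟩ : Fin c) = ⟨(j:ℕ), hqc j⟩ := hinj h
      have hval : (i:ℕ) = (j:ℕ) := Fin.mk.inj hfin
      exact hne (Fin.ext hval)
    have hdisj := scomp_subset (hbr ⟨(i:ℕ), hqc i⟩).1 (hbr ⟨(j:ℕ), hqc j⟩).1
      (hgH i) (hij ▸ hgH j)
    exact hHne (Set.Subset.antisymm hdisj
      (scomp_subset (hbr ⟨(j:ℕ), hqc j⟩).1 (hbr ⟨(i:ℕ), hqc i⟩).1 (hgH j) (hij ▸ hgH i)))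
  -- counting
  have himg : Finset.image g Finset.univ ⊆ X m := by
    intro v hv
    obtain ⟨i, _, rfl⟩ := Finset.mem_image.1 hv
    exact hgX i
  have hxnot : x ∉ Finset.image g Finset.univ := by
    intro hxin
    obtain ⟨i, _, hgi⟩ := Finset.mem_image.1 hxin
    exact (hbr ⟨(i:ℕ), hqc i⟩).1.2.1 _ (hgH i) (hgi ▸ hx)
  have hsub : insert x (Finset.image g Finset.univ) ⊆ X m :=
    Finset.insert_subset (haxmem x hx) himg
  have hcard : (q:ℕ) + 2 ≤ (X m).card := by
    calc (q:ℕ) + 2 = (Finset.image g Finset.univ).card + 1 := by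
          rw [Finset.card_image_of_injective _ hginj, Finset.card_univ, Fintype.card_fin]
      _ = (insert x (Finset.image g Finset.univ)).card :=
          (Finset.card_insert_of_notMem hxnot).symm
      _ ≤ (X m).card := Finset.card_le_card hsub
  have := hw m hml
  omega
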